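/- Over the alphabet A_2 = {a_0, a_1}, there do not exist finite maximal prefix codes P_1, P_2, Q_1, Q_2 ⊆ A_2^* and finite maximal joinless codes U, V, W ⊆ 2A_2^* such that P_1 × P_2 = (ε, a_0)·U ∪ (a_0, a_1)·V ∪ (a_1, a_1)·W and Q_1 × Q_2 = (a_0, a_1)·U ∪ (a_1, a_1)·V ∪ (ε, a_0)·W, where for a pair z ∈ 2A_2^* and a set S ⊆ 2A_2^*, z·S denotes {z·s : s ∈ S} with coordinatewise concatenation. (This is the key fact showing that the right-ideal morphism with table (ε,a_0)↦(a_0,a_1), (a_0,a_1)↦(a_1,a_1), (a_1,a_1)↦(ε,a_0) does not represent a product code element of the Brin-Thompson group 2G_{2,1}.) -/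
import Mathlib


/-- A prefix code: no element is a strict prefix of another. -/
def PrefixCode (P : Set (List (Fin 2))) : Prop :=
  ∀ p ∈ P, ∀ q ∈ P, p <+: q → p = q

/-- A maximal prefix code of `A_2^*`. -/
def MaxPrefixCode (P : Set (List (Fin 2))) : Prop :=
  PrefixCode P ∧ ∀ Q : Set (List (Fin 2)), PrefixCode Q → P ⊆ Q → P = Q

/-- A joinless code in `2A_2^*`: no two distinct pairs are coordinatewise
prefix-comparable. -/
def Joinless2 (S : Set (List (Fin 2) × List (Fin 2))) : Prop :=
  ∀ u ∈ S, ∀ v ∈ S, u ≠ v →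
    ¬ ((u.1 <+: v.1 ∨ v.1 <+: u.1) ∧ (u.2 <+: v.2 ∨ v.2 <+: u.2))

/-- A maximal joinless code in `2A_2^*`. -/
def MaxJoinless2 (S : Set (List (Fin 2) × List (Fin 2))) : Prop :=
  Joinless2 S ∧
    ∀ T : Set (List (Fin 2) × List (Fin 2)), Joinless2 T → S ⊆ T → S = T

/-- `z·S`, coordinatewise left concatenation of the pair `z` onto each element of `S`. -/
def lshift (z : List (Fin 2) × List (Fin 2)) (S : Set (List (Fin 2) × List (Fin 2))) :
    Set (List (Fin 2) × List (Fin 2)) :=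
  (fun s => (z.1 ++ s.1, z.2 ++ s.2)) '' S

lemma maxpc_nonempty {P : Set (List (Fin 2))} (h : MaxPrefixCode P) : P.Nonempty := by
  by_contra hne
  rw [Set.not_nonempty_iff_eq_empty] at hne
  have h2 := h.2 {[]} (by intro p hp q hq _; simp_all) (by simp [hne])
  rw [hne] at h2
  exact absurd h2.symm (by simp)

lemma maxjl_nonempty {S : Set (List (Fin 2) × List (Fin 2))} (h : MaxJoinless2 S) :
    S.Nonempty := by
  by_contra hne
  rw [Set.not_nonempty_iff_eq_empty] at hne
  have h2 := h.2 {([], [])} (by intro u hu v hv huv; simp_all) (by simp [hne])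
  rw [hne] at h2
  exact absurd h2.symm (by simp)

lemma exists_cons {P : Set (List (Fin 2))} (h : MaxPrefixCode P) (hε : [] ∉ P)
    (a : Fin 2) : ∃ x, a :: x ∈ P := by
  by_contra hno
  push_neg at hno
  have hpc : PrefixCode (insert [a] P) := by
    intro p hp q hq hpq
    rcases hp with rfl | hp
    · rcases hq with rfl | hq
      · rfl
      · obtain ⟨t, ht⟩ := hpq
        subst ht
        exact (hno t hq).elim
    · rcases hq with rfl | hq
      · obtain ⟨t, ht⟩ := hpq
        cases p with
        | nil => exact absurd hp hε
        | cons b l =>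
          rw [List.cons_append] at ht
          injection ht with h1 h2
          obtain ⟨rfl, rfl⟩ := List.append_eq_nil_iff.mp h2
          subst h1
          exact absurd hp (hno [])
      · exact h.1 p hp q hq hpq
  have := h.2 _ hpc (Set.subset_insert _ _)
  have : [a] ∈ P := this ▸ Set.mem_insert _ _
  exact hno [] this

/-- There are no finite maximal prefix codes `P_1, P_2, Q_1, Q_2 ⊆ A_2^*` and finite
maximal joinless codes `U, V, W ⊆ 2A_2^*` with
`P_1 × P_2 = (ε,a_0)·U ∪ (a_0,a_1)·V ∪ (a_1,a_1)·W` and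
`Q_1 × Q_2 = (a_0,a_1)·U ∪ (a_1,a_1)·V ∪ (ε,a_0)·W`. -/
theorem stmt_19 :
    ¬ ∃ (P1 P2 Q1 Q2 : Set (List (Fin 2)))
        (U V W : Set (List (Fin 2) × List (Fin 2))),
      P1.Finite ∧ P2.Finite ∧ Q1.Finite ∧ Q2.Finite ∧
      U.Finite ∧ V.Finite ∧ W.Finite ∧
      MaxPrefixCode P1 ∧ MaxPrefixCode P2 ∧ MaxPrefixCode Q1 ∧ MaxPrefixCode Q2 ∧
      MaxJoinless2 U ∧ MaxJoinless2 V ∧ MaxJoinless2 W ∧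
      P1 ×ˢ P2 = lshift ([], [0]) U ∪ lshift ([0], [1]) V ∪ lshift ([1], [1]) W ∧
      Q1 ×ˢ Q2 = lshift ([0], [1]) U ∪ lshift ([1], [1]) V ∪ lshift ([], [0]) W := by
  rintro ⟨P1, P2, Q1, Q2, U, V, W, hP1f, hP2f, hQ1f, hQ2f, hUf, hVf, hWf,
    hP1, hP2, hQ1, hQ2, hU, hV, hW, heq1, heq2⟩
  obtain ⟨u, hu⟩ := maxjl_nonempty hU
  obtain ⟨v, hv⟩ := maxjl_nonempty hV
  obtain ⟨w, hw⟩ := maxjl_nonempty hW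
  -- name the letter sets
  set A : Set (List (Fin 2)) := {y | (0 : Fin 2) :: y ∈ P2} with hA
  set B : Set (List (Fin 2)) := {y | (1 : Fin 2) :: y ∈ P2} with hB
  set C : Set (List (Fin 2)) := {x | (0 : Fin 2) :: x ∈ P1} with hC
  set D : Set (List (Fin 2)) := {x | (1 : Fin 2) :: x ∈ P1} with hD
  set E : Set (List (Fin 2)) := {y | (0 : Fin 2) :: y ∈ Q2} with hE
  set F : Set (List (Fin 2)) := {y | (1 : Fin 2) :: y ∈ Q2} with hF
  set G : Set (List (Fin 2)) := {x | (0 : Fin 2) :: x ∈ Q1} with hG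
  set H : Set (List (Fin 2)) := {x | (1 : Fin 2) :: x ∈ Q1} with hH
  -- forward inclusions from eq1
  have hUsub : ∀ s ∈ U, s.1 ∈ P1 ∧ (0 : Fin 2) :: s.2 ∈ P2 := by
    intro s hs
    have : (s.1, (0 : Fin 2) :: s.2) ∈ P1 ×ˢ P2 := by
      rw [heq1]; left; left; exact ⟨s, hs, rfl⟩
    simpa using this
  have hVsub : ∀ s ∈ V, (0 : Fin 2) :: s.1 ∈ P1 ∧ (1 : Fin 2) :: s.2 ∈ P2 := by
    intro s hs
    have : ((0 : Fin 2) :: s.1, (1 : Fin 2) :: s.2) ∈ P1 ×ˢ P2 := by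
      rw [heq1]; left; right; exact ⟨s, hs, rfl⟩
    simpa using this
  have hWsub : ∀ s ∈ W, (1 : Fin 2) :: s.1 ∈ P1 ∧ (1 : Fin 2) :: s.2 ∈ P2 := by
    intro s hs
    have : ((1 : Fin 2) :: s.1, (1 : Fin 2) :: s.2) ∈ P1 ×ˢ P2 := by
      rw [heq1]; right; exact ⟨s, hs, rfl⟩
    simpa using this
  have hUsub2 : ∀ s ∈ U, (0 : Fin 2) :: s.1 ∈ Q1 ∧ (1 : Fin 2) :: s.2 ∈ Q2 := by
    intro s hs
    have : ((0 : Fin 2) :: s.1, (1 : Fin 2) :: s.2) ∈ Q1 ×ˢ Q2 := by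
      rw [heq2]; left; left; exact ⟨s, hs, rfl⟩
    simpa using this
  have hVsub2 : ∀ s ∈ V, (1 : Fin 2) :: s.1 ∈ Q1 ∧ (1 : Fin 2) :: s.2 ∈ Q2 := by
    intro s hs
    have : ((1 : Fin 2) :: s.1, (1 : Fin 2) :: s.2) ∈ Q1 ×ˢ Q2 := by
      rw [heq2]; left; right; exact ⟨s, hs, rfl⟩
    simpa using this
  have hWsub2 : ∀ s ∈ W, s.1 ∈ Q1 ∧ (0 : Fin 2) :: s.2 ∈ Q2 := by
    intro s hs
    have : (s.1, (0 : Fin 2) :: s.2) ∈ Q1 ×ˢ Q2 := by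
      rw [heq2]; right; exact ⟨s, hs, rfl⟩
    simpa using this
  -- ε not in P1, Q1
  have hεP1 : [] ∉ P1 := by
    intro h
    have h2 := (hVsub v hv).1
    have := hP1.1 [] h _ h2 List.nil_prefix
    simp at this
  have hεQ1 : [] ∉ Q1 := by
    intro h
    have h2 := (hUsub2 u hu).1
    have := hQ1.1 [] h _ h2 List.nil_prefix
    simp at this
  -- product characterizations
  have hU1 : ∀ x y, (x, y) ∈ U ↔ x ∈ P1 ∧ y ∈ A := by
    intro x y
    constructor
    · intro hxy; exact hUsub (x, y) hxy
    · rintro ⟨hx, hy⟩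
      have : (x, (0 : Fin 2) :: y) ∈ P1 ×ˢ P2 := by simpa using ⟨hx, hy⟩
      rw [heq1] at this
      rcases this with (⟨s, hs, hse⟩ | ⟨s, hs, hse⟩) | ⟨s, hs, hse⟩
      · simp only [lshift, Prod.mk.injEq, List.nil_append, List.cons_append,
          List.nil_append] at hse ⊢
        obtain ⟨h1, h2⟩ := hse
        simp only [List.singleton_append, List.cons.injEq] at h2
        have : (x, y) = s := by
          cases s; simp_all
        exact this ▸ hs
      · exfalso
        have h2 := congrArg Prod.snd hse
        simp [List.singleton_append] at h2
      · exfalso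
        have h2 := congrArg Prod.snd hse
        simp [List.singleton_append] at h2
  have hV1 : ∀ x y, (x, y) ∈ V ↔ x ∈ C ∧ y ∈ B := by
    intro x y
    constructor
    · intro hxy; exact hVsub (x, y) hxy
    · rintro ⟨hx, hy⟩
      have : ((0 : Fin 2) :: x, (1 : Fin 2) :: y) ∈ P1 ×ˢ P2 := by simpa using ⟨hx, hy⟩
      rw [heq1] at this
      rcases this with (⟨s, hs, hse⟩ | ⟨s, hs, hse⟩) | ⟨s, hs, hse⟩
      · exfalso
        have h2 := congrArg Prod.snd hse
        simp [List.singleton_append] at h2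
      · rw [Prod.ext_iff] at hse
        obtain ⟨h1, h2⟩ := hse
        simp only [List.singleton_append, List.cons.injEq, true_and] at h1 h2
        have : (x, y) = s := by cases s; simp_all
        exact this ▸ hs
      · exfalso
        have h1 := congrArg Prod.fst hse
        simp [List.singleton_append] at h1
  have hW1 : ∀ x y, (x, y) ∈ W ↔ x ∈ D ∧ y ∈ B := by
    intro x y
    constructor
    · intro hxy; exact hWsub (x, y) hxy
    · rintro ⟨hx, hy⟩
      have : ((1 : Fin 2) :: x, (1 : Fin 2) :: y) ∈ P1 ×ˢ P2 := by simpa using ⟨hx, hy⟩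
      rw [heq1] at this
      rcases this with (⟨s, hs, hse⟩ | ⟨s, hs, hse⟩) | ⟨s, hs, hse⟩
      · exfalso
        have h2 := congrArg Prod.snd hse
        simp [List.singleton_append] at h2
      · exfalso
        have h1 := congrArg Prod.fst hse
        simp [List.singleton_append] at h1
      · rw [Prod.ext_iff] at hse
        obtain ⟨h1, h2⟩ := hse
        simp only [List.singleton_append, List.cons.injEq, true_and] at h1 h2
        have : (x, y) = s := by cases s; simp_all
        exact this ▸ hs
  have hU2 : ∀ x y, (x, y) ∈ U ↔ x ∈ G ∧ y ∈ F := by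
    intro x y
    constructor
    · intro hxy; exact hUsub2 (x, y) hxy
    · rintro ⟨hx, hy⟩
      have : ((0 : Fin 2) :: x, (1 : Fin 2) :: y) ∈ Q1 ×ˢ Q2 := by simpa using ⟨hx, hy⟩
      rw [heq2] at this
      rcases this with (⟨s, hs, hse⟩ | ⟨s, hs, hse⟩) | ⟨s, hs, hse⟩
      · rw [Prod.ext_iff] at hse
        obtain ⟨h1, h2⟩ := hse
        simp only [List.singleton_append, List.cons.injEq, true_and] at h1 h2
        have : (x, y) = s := by cases s; simp_all
        exact this ▸ hs
      · exfalso
        have h1 := congrArg Prod.fst hse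
        simp [List.singleton_append] at h1
      · exfalso
        have h2 := congrArg Prod.snd hse
        simp [List.singleton_append] at h2
  have hV2 : ∀ x y, (x, y) ∈ V ↔ x ∈ H ∧ y ∈ F := by
    intro x y
    constructor
    · intro hxy; exact hVsub2 (x, y) hxy
    · rintro ⟨hx, hy⟩
      have : ((1 : Fin 2) :: x, (1 : Fin 2) :: y) ∈ Q1 ×ˢ Q2 := by simpa using ⟨hx, hy⟩
      rw [heq2] at this
      rcases this with (⟨s, hs, hse⟩ | ⟨s, hs, hse⟩) | ⟨s, hs, hse⟩
      · exfalso
        have h1 := congrArg Prod.fst hse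
        simp [List.singleton_append] at h1
      · rw [Prod.ext_iff] at hse
        obtain ⟨h1, h2⟩ := hse
        simp only [List.singleton_append, List.cons.injEq, true_and] at h1 h2
        have : (x, y) = s := by cases s; simp_all
        exact this ▸ hs
      · exfalso
        have h2 := congrArg Prod.snd hse
        simp [List.singleton_append] at h2
  have hW2 : ∀ x y, (x, y) ∈ W ↔ x ∈ Q1 ∧ y ∈ E := by
    intro x y
    constructor
    · intro hxy; exact hWsub2 (x, y) hxy
    · rintro ⟨hx, hy⟩
      have : (x, (0 : Fin 2) :: y) ∈ Q1 ×ˢ Q2 := by simpa using ⟨hx, hy⟩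
      rw [heq2] at this
      rcases this with (⟨s, hs, hse⟩ | ⟨s, hs, hse⟩) | ⟨s, hs, hse⟩
      · exfalso
        have h2 := congrArg Prod.snd hse
        simp [List.singleton_append] at h2
      · exfalso
        have h2 := congrArg Prod.snd hse
        simp [List.singleton_append] at h2
      · rw [Prod.ext_iff] at hse
        obtain ⟨h1, h2⟩ := hse
        simp only [List.singleton_append, List.cons.injEq, true_and,
          List.nil_append] at h1 h2
        have : (x, y) = s := by cases s; simp_all
        exact this ▸ hs
  -- nonemptiness of letter sets
  have huA : u.2 ∈ A := ((hU1 u.1 u.2).mp (by simpa using hu)).2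
  have huF : u.2 ∈ F := ((hU2 u.1 u.2).mp (by simpa using hu)).2
  have hvB : v.2 ∈ B := ((hV1 v.1 v.2).mp (by simpa using hv)).2
  have hvF : v.2 ∈ F := ((hV2 v.1 v.2).mp (by simpa using hv)).2
  have hwE : w.2 ∈ E := ((hW2 w.1 w.2).mp (by simpa using hw)).2
  -- derived set equalities
  have hP1G : P1 = G := Set.ext fun x =>
    ⟨fun hx => ((hU2 x u.2).mp ((hU1 x u.2).mpr ⟨hx, huA⟩)).1,
     fun hx => ((hU1 x u.2).mp ((hU2 x u.2).mpr ⟨hx, huF⟩)).1⟩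
  have hCH : C = H := Set.ext fun x =>
    ⟨fun hx => ((hV2 x v.2).mp ((hV1 x v.2).mpr ⟨hx, hvB⟩)).1,
     fun hx => ((hV1 x v.2).mp ((hV2 x v.2).mpr ⟨hx, hvF⟩)).1⟩
  have hDQ1 : D = Q1 := Set.ext fun x =>
    ⟨fun hx => ((hW2 x v.2).mp ((hW1 x v.2).mpr ⟨hx, hvB⟩)).1,
     fun hx => ((hW1 x w.2).mp ((hW2 x w.2).mpr ⟨hx, hwE⟩)).1⟩
  -- decompositions by first letter
  have hP1dec : P1 = (List.cons 0) '' C ∪ (List.cons 1) '' Q1 := by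
    ext p
    constructor
    · intro hp
      match p with
      | [] => exact absurd hp hεP1
      | a :: l =>
        fin_cases a
        · exact Or.inl ⟨l, hp, rfl⟩
        · exact Or.inr ⟨l, hDQ1 ▸ hp, rfl⟩
    · rintro (⟨x, hx, rfl⟩ | ⟨x, hx, rfl⟩)
      · exact hx
      · exact (hDQ1.symm ▸ hx : x ∈ D)
  have hQ1dec : Q1 = (List.cons 0) '' P1 ∪ (List.cons 1) '' C := by
    ext p
    constructor
    · intro hp
      match p with
      | [] => exact absurd hp hεQ1
      | a :: l =>
        fin_cases a
        · exact Or.inl ⟨l, hP1G ▸ (hp : l ∈ G), rfl⟩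
        · exact Or.inr ⟨l, hCH ▸ (hp : l ∈ H), rfl⟩
    · rintro (⟨x, hx, rfl⟩ | ⟨x, hx, rfl⟩)
      · exact (hP1G ▸ hx : x ∈ G)
      · exact (hCH ▸ hx : x ∈ H)
  -- finiteness
  have hCf : C.Finite := hP1f.preimage (List.cons_injective.injOn)
  -- disjointness of the two image pieces
  have hdisj : ∀ (S T : Set (List (Fin 2))),
      Disjoint ((List.cons (0 : Fin 2)) '' S) ((List.cons (1 : Fin 2)) '' T) := by
    intro S T
    rw [Set.disjoint_left]
    rintro p ⟨x, hx, rfl⟩ ⟨y, hy, h⟩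
    injection h with h1 _
    exact absurd h1 (by decide)
  have hcard1 : P1.ncard = C.ncard + Q1.ncard := by
    rw [hP1dec, Set.ncard_union_eq (hdisj C Q1) (hCf.image _) (hQ1f.image _),
      Set.ncard_image_of_injective _ List.cons_injective,
      Set.ncard_image_of_injective _ List.cons_injective]
  have hcard2 : Q1.ncard = P1.ncard + C.ncard := by
    rw [hQ1dec, Set.ncard_union_eq (hdisj P1 C) (hP1f.image _) (hCf.image _),
      Set.ncard_image_of_injective _ List.cons_injective,
      Set.ncard_image_of_injective _ List.cons_injective]
  have hCpos : 0 < C.ncard := by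
    obtain ⟨x, hx⟩ := exists_cons hP1 hεP1 0
    exact (Set.ncard_pos hCf).mpr ⟨x, hx⟩
  omega
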